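/- arXiv:1312.3980 — 3 statements merged into one kernel-verified Lean document; each statement's English description precedes it below -/
import Mathlib

section
/- The Köthe (upper nil) radical of a triangular algebra T = Trian(A, M, B) is Nil*(T) = Trian(Nil*(A), M, Nil*(B)), i.e., the set of matrices ((a, m), (0, b)) with a ∈ Nil*(A), m ∈ M, b ∈ Nil*(B) is the largest nil two-sided ideal of T. -/
/-! The Köthe upper nil radical of the triangular algebra `T = Trian(A, M, B)` is
`Trian(Nil*(A), M, Nil*(B))`: the set of matrices `((a, m), (0, b))` with
`a ∈ Nil*(A)`, `b ∈ Nil*(B)` is the largest nil two-sided ideal of `T`. -/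

/-- The Köthe upper nil radical of a ring: the sum (supremum) of all nil
two-sided ideals. -/
noncomputable def nilStar (R : Type*) [Ring R] : TwoSidedIdeal R :=
  sSup {I : TwoSidedIdeal R | ∀ x ∈ I, IsNilpotent x}

section NilStarGeneral

variable {R : Type*} [Ring R]

lemma pow_zero_of_le {a : R} {m n : ℕ} (hm : a ^ m = 0) (h : m ≤ n) : a ^ n = 0 := by
  rw [← Nat.add_sub_cancel' h, pow_add, hm, zero_mul]

lemma pow_mem_of_add {I : TwoSidedIdeal R} {y z : R} (hy : y ∈ I)
    {n : ℕ} (hz : z ^ n = 0) : (y + z) ^ n ∈ I := by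
  have h0 : ((y : I.ringCon.Quotient)) = ((0 : R) : I.ringCon.Quotient) :=
    (RingCon.eq I.ringCon).mpr ((I.rel_iff y 0).mpr (by simpa using hy))
  have key : (((y + z) ^ n : R) : I.ringCon.Quotient) = ((0 : R) : I.ringCon.Quotient) := by
    rw [RingCon.coe_pow, RingCon.coe_add, h0, RingCon.coe_zero, zero_add,
      ← RingCon.coe_pow, hz, RingCon.coe_zero]
  have := (RingCon.eq I.ringCon).mp key
  rw [I.rel_iff] at this
  simpa using this

lemma nil_sup {I J : TwoSidedIdeal R} (hI : ∀ x ∈ I, IsNilpotent x)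
    (hJ : ∀ x ∈ J, IsNilpotent x) : ∀ x ∈ I ⊔ J, IsNilpotent x := by
  intro x hx
  rw [TwoSidedIdeal.mem_sup] at hx
  obtain ⟨y, hy, z, hz, rfl⟩ := hx
  obtain ⟨n, hn⟩ := hJ z hz
  obtain ⟨m, hm⟩ := hI _ (pow_mem_of_add hy hn)
  exact ⟨n * m, by rw [pow_mul, hm]⟩

/-- The set of elements belonging to some nil two-sided ideal, as a two-sided ideal. -/
noncomputable def nilUnion (R : Type*) [Ring R] : TwoSidedIdeal R :=
  TwoSidedIdeal.mk' {x | ∃ I : TwoSidedIdeal R, (∀ y ∈ I, IsNilpotent y) ∧ x ∈ I}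
    ⟨⊥, fun y hy => by rw [TwoSidedIdeal.mem_bot] at hy; exact hy ▸ ⟨1, by simp⟩,
      TwoSidedIdeal.zero_mem ⊥⟩
    (fun {x y} ⟨I, hI, hx⟩ ⟨J, hJ, hy⟩ =>
      ⟨I ⊔ J, nil_sup hI hJ,
        TwoSidedIdeal.add_mem _ (TwoSidedIdeal.mem_sup_left hx) (TwoSidedIdeal.mem_sup_right hy)⟩)
    (fun {x} ⟨I, hI, hx⟩ => ⟨I, hI, I.neg_mem hx⟩)
    (fun {x y} ⟨I, hI, hy⟩ => ⟨I, hI, I.mul_mem_left x y hy⟩)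
    (fun {x y} ⟨I, hI, hx⟩ => ⟨I, hI, I.mul_mem_right x y hx⟩)

lemma nilStar_eq_nilUnion : nilStar R = nilUnion R := by
  apply le_antisymm
  · apply sSup_le
    intro I hI x hx
    rw [nilUnion, TwoSidedIdeal.mem_mk']
    exact ⟨I, hI, hx⟩
  · intro x hx
    rw [nilUnion, TwoSidedIdeal.mem_mk'] at hx
    obtain ⟨I, hI, hx⟩ := hx
    exact le_sSup (show I ∈ {I : TwoSidedIdeal R | ∀ x ∈ I, IsNilpotent x} from hI) hx

lemma nilStar_nil : ∀ x ∈ nilStar R, IsNilpotent x := by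
  intro x hx
  rw [nilStar_eq_nilUnion, nilUnion, TwoSidedIdeal.mem_mk'] at hx
  obtain ⟨I, hI, hx⟩ := hx
  exact hI x hx

lemma mem_nilStar_of_mem {I : TwoSidedIdeal R} (hI : ∀ y ∈ I, IsNilpotent y) {x : R}
    (hx : x ∈ I) : x ∈ nilStar R :=
  le_sSup (show I ∈ {I : TwoSidedIdeal R | ∀ x ∈ I, IsNilpotent x} from hI) hx

end NilStarGeneral

section Trian

variable (A B M : Type*) [Ring A] [Ring B] [AddCommGroup M]
  [Module A M] [Module Bᵐᵒᵖ M] [SMulCommClass A Bᵐᵒᵖ M]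

noncomputable local instance modFst : Module (A × B) M :=
  Module.compHom M (RingHom.fst A B)

noncomputable local instance modSndOp : Module (A × B)ᵐᵒᵖ M :=
  Module.compHom M (RingHom.op (RingHom.snd A B))

local instance : SMulCommClass (A × B) (A × B)ᵐᵒᵖ M :=
  ⟨fun p q m => smul_comm p.1 (MulOpposite.op q.unop.2) m⟩

/-- The triangular algebra `Trian(A, M, B)`, realized as the trivial square-zero
extension of `A × B` by `M`. An element `x` corresponds to the matrix
`((x.fst.1, x.snd), (0, x.fst.2))`. -/
noncomputable abbrev Trian := TrivSqZeroExt (A × B) M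

set_option linter.unusedSectionVars false in
/-- An element of the triangular algebra whose diagonal part is nilpotent is nilpotent. -/
lemma trian_isNilpotent {x : Trian A B M} (h : IsNilpotent x.fst) : IsNilpotent x := by
  obtain ⟨k, hk⟩ := h
  have hk' : x.fst ^ (k + 1) = 0 := by rw [pow_succ, hk, zero_mul]
  refine ⟨2 * (k + 1), ?_⟩
  refine TrivSqZeroExt.ext ?_ ?_
  · rw [TrivSqZeroExt.fst_pow, TrivSqZeroExt.fst_zero]
    exact pow_zero_of_le hk' (by omega)
  · rw [TrivSqZeroExt.snd_pow_eq_sum, TrivSqZeroExt.snd_zero]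
    apply List.sum_eq_zero
    intro y hy
    simp only [List.mem_map, List.mem_range] at hy
    obtain ⟨i, hi, rfl⟩ := hy
    rcases le_or_gt (k + 1) i with h1 | h1
    · rw [pow_zero_of_le hk' h1]
      simp
    · rw [pow_zero_of_le hk' (show k + 1 ≤ (2 * (k + 1)).pred - i by
        rw [Nat.pred_eq_sub_one]; omega)]
      simp

/-- The candidate ideal `Trian(Nil*(A), M, Nil*(B))`. -/
noncomputable def trianJ : TwoSidedIdeal (Trian A B M) :=
  TwoSidedIdeal.mk' {x | x.fst.1 ∈ nilStar A ∧ x.fst.2 ∈ nilStar B}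
    (by simp only [Set.mem_setOf_eq, TrivSqZeroExt.fst_zero, Prod.fst_zero, Prod.snd_zero]
        exact ⟨TwoSidedIdeal.zero_mem _, TwoSidedIdeal.zero_mem _⟩)
    (fun {x y} hx hy => by
      simp only [Set.mem_setOf_eq, TrivSqZeroExt.fst_add, Prod.fst_add, Prod.snd_add] at *
      exact ⟨TwoSidedIdeal.add_mem _ hx.1 hy.1, TwoSidedIdeal.add_mem _ hx.2 hy.2⟩)
    (fun {x} hx => by
      simp only [Set.mem_setOf_eq, TrivSqZeroExt.fst_neg, Prod.fst_neg, Prod.snd_neg] at *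
      exact ⟨TwoSidedIdeal.neg_mem _ hx.1, TwoSidedIdeal.neg_mem _ hx.2⟩)
    (fun {x y} hy => by
      simp only [Set.mem_setOf_eq, TrivSqZeroExt.fst_mul, Prod.fst_mul, Prod.snd_mul] at *
      exact ⟨TwoSidedIdeal.mul_mem_left _ _ _ hy.1, TwoSidedIdeal.mul_mem_left _ _ _ hy.2⟩)
    (fun {x y} hx => by
      simp only [Set.mem_setOf_eq, TrivSqZeroExt.fst_mul, Prod.fst_mul, Prod.snd_mul] at *
      exact ⟨TwoSidedIdeal.mul_mem_right _ _ _ hx.1, TwoSidedIdeal.mul_mem_right _ _ _ hx.2⟩)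

set_option linter.unusedSectionVars false in
lemma mem_trianJ {x : Trian A B M} :
    x ∈ trianJ A B M ↔ x.fst.1 ∈ nilStar A ∧ x.fst.2 ∈ nilStar B :=
  TwoSidedIdeal.mem_mk' _ _ _ _ _ _ x

lemma trianJ_nil : ∀ x ∈ trianJ A B M, IsNilpotent x := by
  intro x hx
  rw [mem_trianJ] at hx
  obtain ⟨m, hm⟩ := nilStar_nil _ hx.1
  obtain ⟨n, hn⟩ := nilStar_nil _ hx.2
  refine trian_isNilpotent A B M ⟨m + n, ?_⟩
  rw [Prod.pow_def]
  ext
  · exact pow_zero_of_le hm (by omega)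
  · exact pow_zero_of_le hn (by omega)

lemma le_trianJ (I : TwoSidedIdeal (Trian A B M)) (hI : ∀ x ∈ I, IsNilpotent x) :
    I ≤ trianJ A B M := by
  intro x hx
  rw [mem_trianJ]
  constructor
  · set IA : TwoSidedIdeal A := TwoSidedIdeal.mk' {a | ∃ y ∈ I, y.fst.1 = a}
      ⟨0, I.zero_mem, rfl⟩
      (fun {a b} ⟨y, hy, hya⟩ ⟨z, hz, hzb⟩ => ⟨y + z, I.add_mem hy hz, by
        rw [TrivSqZeroExt.fst_add, Prod.fst_add, hya, hzb]⟩)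
      (fun {a} ⟨y, hy, hya⟩ => ⟨-y, I.neg_mem hy, by
        rw [TrivSqZeroExt.fst_neg, Prod.fst_neg, hya]⟩)
      (fun {c a} ⟨y, hy, hya⟩ => ⟨(TrivSqZeroExt.inl (c, 0) : Trian A B M) * y,
        I.mul_mem_left _ _ hy, by
          rw [TrivSqZeroExt.fst_mul, TrivSqZeroExt.fst_inl, Prod.fst_mul, hya]⟩)
      (fun {a c} ⟨y, hy, hya⟩ => ⟨y * (TrivSqZeroExt.inl (c, 0) : Trian A B M),
        I.mul_mem_right _ _ hy, by
          rw [TrivSqZeroExt.fst_mul, TrivSqZeroExt.fst_inl, Prod.fst_mul, hya]⟩) with hIA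
    have hIAnil : ∀ a ∈ IA, IsNilpotent a := by
      rintro a ha
      rw [hIA, TwoSidedIdeal.mem_mk'] at ha
      obtain ⟨y, hy, rfl⟩ := ha
      obtain ⟨n, hn⟩ := hI y hy
      exact ⟨n, by
        simpa [Prod.pow_def] using congrArg (fun z : Trian A B M => (TrivSqZeroExt.fst z).1) hn⟩
    exact mem_nilStar_of_mem hIAnil (by rw [hIA, TwoSidedIdeal.mem_mk']; exact ⟨x, hx, rfl⟩)
  · set IB : TwoSidedIdeal B := TwoSidedIdeal.mk' {b | ∃ y ∈ I, y.fst.2 = b}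
      ⟨0, I.zero_mem, rfl⟩
      (fun {a b} ⟨y, hy, hya⟩ ⟨z, hz, hzb⟩ => ⟨y + z, I.add_mem hy hz, by
        rw [TrivSqZeroExt.fst_add, Prod.snd_add, hya, hzb]⟩)
      (fun {a} ⟨y, hy, hya⟩ => ⟨-y, I.neg_mem hy, by
        rw [TrivSqZeroExt.fst_neg, Prod.snd_neg, hya]⟩)
      (fun {c a} ⟨y, hy, hya⟩ => ⟨(TrivSqZeroExt.inl (0, c) : Trian A B M) * y,
        I.mul_mem_left _ _ hy, by
          rw [TrivSqZeroExt.fst_mul, TrivSqZeroExt.fst_inl, Prod.snd_mul, hya]⟩)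
      (fun {a c} ⟨y, hy, hya⟩ => ⟨y * (TrivSqZeroExt.inl (0, c) : Trian A B M),
        I.mul_mem_right _ _ hy, by
          rw [TrivSqZeroExt.fst_mul, TrivSqZeroExt.fst_inl, Prod.snd_mul, hya]⟩) with hIB
    have hIBnil : ∀ b ∈ IB, IsNilpotent b := by
      rintro b hb
      rw [hIB, TwoSidedIdeal.mem_mk'] at hb
      obtain ⟨y, hy, rfl⟩ := hb
      obtain ⟨n, hn⟩ := hI y hy
      exact ⟨n, by
        simpa [Prod.pow_def] using congrArg (fun z : Trian A B M => (TrivSqZeroExt.fst z).2) hn⟩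
    exact mem_nilStar_of_mem hIBnil (by rw [hIB, TwoSidedIdeal.mem_mk']; exact ⟨x, hx, rfl⟩)

lemma nilStar_trian_eq : nilStar (Trian A B M) = trianJ A B M :=
  le_antisymm (sSup_le fun I hI => le_trianJ A B M I hI)
    (le_sSup (show trianJ A B M ∈ {I : TwoSidedIdeal (Trian A B M) | ∀ x ∈ I, IsNilpotent x}
      from trianJ_nil A B M))

theorem nilStar_of_trian [Nontrivial M] :
    (∀ x : Trian A B M,
        x ∈ nilStar (Trian A B M) ↔ x.fst.1 ∈ nilStar A ∧ x.fst.2 ∈ nilStar B) ∧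
    (∀ x ∈ nilStar (Trian A B M), IsNilpotent x) ∧
    (∀ I : TwoSidedIdeal (Trian A B M),
        (∀ x ∈ I, IsNilpotent x) → I ≤ nilStar (Trian A B M)) := by
  refine ⟨?_, ?_, ?_⟩
  · intro x
    rw [nilStar_trian_eq, mem_trianJ]
  · intro x hx
    rw [nilStar_trian_eq] at hx
    exact trianJ_nil A B M x hx
  · intro I hI
    exact le_sSup (show I ∈ {J : TwoSidedIdeal (Trian A B M) | ∀ x ∈ J, IsNilpotent x} from hI)


end Trian
end

section
/- Let A be an algebra, σ an automorphism, and x₀ ∈ A an element satisfying [[x, y], x₀]_σ = 0 for all x, y ∈ A. Then the map ψ_{x₀}(x, y) = [x, [y, x₀]_σ]_σ is a symmetric bilinear σ-biderivation of A. -/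
/-! If `x₀ ∈ A` satisfies `[[x, y], x₀]_σ = 0` for all `x, y`, then
`ψ_{x₀}(x, y) = [x, [y, x₀]_σ]_σ` is a symmetric bilinear `σ`-biderivation. -/

theorem extremal_sigma_biderivation
    (R A : Type*) [CommRing R] [Ring A] [Algebra R A] (σ : A ≃ₐ[R] A)
    (x₀ : A)
    (sbrak : A → A → A) (hsbrak : ∀ x y : A, sbrak x y = σ x * y - y * x)
    (h : ∀ x y : A, sbrak (x * y - y * x) x₀ = 0)
    (ψ : A → A → A) (hψ : ∀ x y : A, ψ x y = sbrak x (sbrak y x₀)) :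
    -- symmetry
    (∀ x y : A, ψ x y = ψ y x) ∧
    -- bilinearity
    (∀ x y z : A, ψ (x + y) z = ψ x z + ψ y z) ∧
    (∀ x y z : A, ψ x (y + z) = ψ x y + ψ x z) ∧
    (∀ (r : R) (x y : A), ψ (r • x) y = r • ψ x y) ∧
    (∀ (r : R) (x y : A), ψ x (r • y) = r • ψ x y) ∧
    -- `σ`-Leibniz rule in each argument
    (∀ x y z : A, ψ (x * y) z = ψ x z * y + σ x * ψ y z) ∧
    (∀ x y z : A, ψ x (y * z) = ψ x y * z + σ y * ψ x z) := by
  have hsym : ∀ x y : A, ψ x y = ψ y x := by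
    intro x y
    have key : ψ x y - ψ y x = sbrak (x * y - y * x) x₀ := by
      simp only [hψ, hsbrak, map_sub, map_mul]
      noncomm_ring
    rw [h x y] at key
    exact sub_eq_zero.mp key
  have hlieb1 : ∀ x y z : A, ψ (x * y) z = ψ x z * y + σ x * ψ y z := by
    intro x y z
    simp only [hψ, hsbrak, map_sub, map_mul]
    noncomm_ring
  refine ⟨hsym, ?_, ?_, ?_, ?_, hlieb1, ?_⟩
  · intro x y z
    simp only [hψ, hsbrak, map_add]
    noncomm_ring
  · intro x y z
    simp only [hψ, hsbrak, map_add]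
    noncomm_ring
  · intro r x y
    simp only [hψ, hsbrak, map_smul, smul_mul_assoc, ← smul_sub, mul_smul_comm]
  · intro r x y
    simp only [hψ, hsbrak, map_smul, smul_mul_assoc, ← smul_sub, mul_smul_comm]
  · intro x y z
    rw [hsym x (y * z), hlieb1 y z x, hsym y x, hsym z x]
end

section
/- Let A be an algebra, σ an automorphism, and D a σ-biderivation of A. Then D(x, y)[u, v] = σ([x, y])D(u, v) for all x, y, u, v ∈ A; moreover D(x, 1) = D(1, x) = 0 for all x, and for any idempotent e ∈ A, D(e, e) = −D(e, 1−e) = −D(1−e, e) = D(1−e, 1−e). -/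
/-! For a `σ`-biderivation `D` of a unital algebra `A`:
`D(x, y)[u, v] = σ([x, y]) D(u, v)`, `D(x, 1) = D(1, x) = 0`, and for any
idempotent `e`, `D(e, e) = -D(e, 1-e) = -D(1-e, e) = D(1-e, 1-e)`. -/

theorem sigma_biderivation_basic_identities
    (R A : Type*) [CommRing R] [Ring A] [Algebra R A] (σ : A ≃ₐ[R] A)
    (D : A → A → A)
    (h1 : ∀ x y z : A, D (x * y) z = D x z * y + σ x * D y z)
    (h2 : ∀ x y z : A, D x (y * z) = D x y * z + σ y * D x z) :
    (∀ x y u v : A, D x y * (u * v - v * u) = σ (x * y - y * x) * D u v) ∧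
    (∀ x : A, D x 1 = 0) ∧
    (∀ x : A, D 1 x = 0) ∧
    (∀ e : A, IsIdempotentElem e →
      D e e = -D e (1 - e) ∧ D e e = -D (1 - e) e ∧ D e e = D (1 - e) (1 - e)) := by
  have hx0 : ∀ x : A, D x 0 = 0 := by
    intro x
    have := h2 x 0 0
    simp only [mul_zero, map_zero, zero_mul, add_zero] at this
    simpa using this
  have h0x : ∀ x : A, D 0 x = 0 := by
    intro x
    have := h1 0 0 x
    simp only [mul_zero, zero_mul, map_zero, add_zero] at this
    simpa using this
  -- main commutator identity
  have main : ∀ x y u v : A, D x y * (u * v - v * u) = σ (x * y - y * x) * D u v := by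
    intro x y u v
    have e1 : D (x * u) (y * v) =
        (D x y * u + σ x * D u y) * v + σ y * (D x v * u + σ x * D u v) := by
      rw [h2, h1, h1]
    have e2 : D (x * u) (y * v) =
        (D x y * v + σ y * D x v) * u + σ x * (D u y * v + σ y * D u v) := by
      rw [h1, h2, h2]
    have h := e1.symm.trans e2
    rw [map_sub, map_mul, map_mul]
    linear_combination (norm := noncomm_ring) h
  -- second-argument idempotent lemma
  have lemA : ∀ e : A, IsIdempotentElem e → ∀ x : A, D x e + D x (1 - e) = 0 := by
    intro e he x
    have hef : e * (1 - e) = 0 := by rw [mul_sub, mul_one, he.eq, sub_self]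
    have hfe : (1 - e) * e = 0 := by rw [sub_mul, one_mul, he.eq, sub_self]
    have hff : (1 - e) * (1 - e) = 1 - e := (he.one_sub).eq
    have A1 := h2 x e (1 - e); rw [hef, hx0] at A1
    have A2 := h2 x (1 - e) e; rw [hfe, hx0] at A2
    have A3 := h2 x e e; rw [he.eq] at A3
    have A4 := h2 x (1 - e) (1 - e); rw [hff] at A4
    simp only [map_sub, map_one] at A1 A2 A3 A4
    linear_combination (norm := noncomm_ring) -A3 - A1 - A2 - A4
  -- first-argument idempotent lemma
  have lemB : ∀ e : A, IsIdempotentElem e → ∀ x : A, D e x + D (1 - e) x = 0 := by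
    intro e he x
    have hef : e * (1 - e) = 0 := by rw [mul_sub, mul_one, he.eq, sub_self]
    have hfe : (1 - e) * e = 0 := by rw [sub_mul, one_mul, he.eq, sub_self]
    have hff : (1 - e) * (1 - e) = 1 - e := (he.one_sub).eq
    have A1 := h1 e (1 - e) x; rw [hef, h0x] at A1
    have A2 := h1 (1 - e) e x; rw [hfe, h0x] at A2
    have A3 := h1 e e x; rw [he.eq] at A3
    have A4 := h1 (1 - e) (1 - e) x; rw [hff] at A4
    simp only [map_sub, map_one] at A1 A2 A3 A4
    linear_combination (norm := noncomm_ring) -A3 - A1 - A2 - A4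
  have hD1 : ∀ x : A, D x 1 = 0 := by
    intro x
    have := h2 x 1 1
    simp only [mul_one, map_one, one_mul] at this
    exact (left_eq_add.mp this)
  have hD1' : ∀ x : A, D 1 x = 0 := by
    intro x
    have := h1 1 1 x
    simp only [mul_one, map_one, one_mul] at this
    exact (left_eq_add.mp this)
  refine ⟨main, hD1, hD1', ?_⟩
  intro e he
  refine ⟨eq_neg_of_add_eq_zero_left (lemA e he e),
    eq_neg_of_add_eq_zero_left (lemB e he e), ?_⟩
  have h3 := lemA e he (1 - e)
  have h4 := lemB e he e
  -- D (1-e) (1-e) = -D (1-e) e = D e e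
  have : D (1 - e) (1 - e) = -D (1 - e) e := eq_neg_of_add_eq_zero_right h3
  rw [this, ← eq_neg_of_add_eq_zero_left h4]
end
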